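/- (Covering number bound for sparse ReLU network classes.) There exists an absolute constant C > 0 such that for every depth L ≥ 1, width vector p = (p0,...,p_{L+1}) with p_{L+1} = 1, sparsity s ≥ 1, envelope F > 0, and every δ ∈ (0,1], the class F(L,p,s,F) of centered s-sparse ReLU networks on [0,1]^{p0} admits a δ-net in the sup norm ‖·‖∞ on [0,1]^{p0} of cardinality N satisfying log N ≤ (s+1) · log( C δ^{−1} (L+1) V² ), where V = Π_{l=0}^{L+1} (p_l + 1). -/

import Mathlib

/-!
Round every parameter of a network in the class to the grid `ℤ / M`, `M = ⌈(L+1) V / δ⌉`.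
An error `ε` in the parameters grows by a factor `p_l + 1` per layer and gains `ε` at each
layer, so the output moves by at most `ε (L+1) Π_{l ≤ L} (p_l + 1) ≤ ε (L+1) V`; with
`ε = 1 / (2M)` the centered rounded networks form a `δ`-net. Zero parameters stay zero, so a
rounded network is described by `s` slots, each empty or holding one of the at most `V`
parameter positions together with a grid value in `[-M, M]`: there are at most
`(V (2M+1) + 1)^s ≤ (6 δ⁻¹ (L+1) V²)^s` of them.
-/

open Filter

noncomputable section

namespace CoxDNN

def cube (p0 : ℕ) : Set (Fin p0 → ℝ) := {x | ∀ i, x i ∈ Set.Icc (0 : ℝ) 1}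

structure ReluNet (p0 : ℕ) where
  L : ℕ
  width : ℕ → ℕ
  W : ℕ → ℕ → ℕ → ℝ
  v : ℕ → ℕ → ℝ

def hiddenOut {p0 : ℕ} (N : ReluNet p0) (x : Fin p0 → ℝ) : ℕ → ℕ → ℝ
  | 0, j => if h : j < p0 then x ⟨j, h⟩ else 0
  | l + 1, i =>
      max ((∑ j ∈ Finset.range (N.width l), N.W l i j * hiddenOut N x l j) - N.v (l + 1) i) 0

def netEval {p0 : ℕ} (N : ReluNet p0) (x : Fin p0 → ℝ) : ℝ :=
  ∑ j ∈ Finset.range (N.width N.L), N.W N.L 0 j * hiddenOut N x N.L j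

def sparsity {p0 : ℕ} (N : ReluNet p0) : ℕ :=
  (∑ l ∈ Finset.range (N.L + 1),
    ((Finset.range (N.width (l + 1)) ×ˢ Finset.range (N.width l)).filter
      (fun ij => N.W l ij.1 ij.2 ≠ 0)).card) +
  ∑ l ∈ Finset.range N.L,
    ((Finset.range (N.width (l + 1))).filter (fun i => N.v (l + 1) i ≠ 0)).card

def ParamsBounded {p0 : ℕ} (N : ReluNet p0) : Prop :=
  (∀ l i j, |N.W l i j| ≤ 1) ∧ ∀ l i, |N.v l i| ≤ 1

def sparseReluClass (p0 : ℕ) (L : ℕ) (p : ℕ → ℕ) (s : ℕ) (F : ℝ) :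
    Set ((Fin p0 → ℝ) → ℝ) :=
  {g | ∃ N : ReluNet p0, N.L = L ∧ N.width = p ∧ p 0 = p0 ∧ p (L + 1) = 1 ∧
    ParamsBounded N ∧ sparsity N ≤ s ∧
    (∀ x, g x = netEval N x - netEval N 0) ∧
    ∀ x ∈ cube p0, |g x| ≤ F}

end CoxDNN

open CoxDNN

namespace CoxDNN

open Finset

lemma abs_round_mul_le (M : ℕ) {t : ℝ} (ht : |t| ≤ 1) : |round (t * M)| ≤ (M : ℤ) := by
  have hM : (0 : ℝ) ≤ M := M.cast_nonneg
  obtain ⟨hr₁, hr₂⟩ := abs_le.1 (abs_sub_round (t * M))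
  obtain ⟨ht₁, ht₂⟩ := abs_le.1 ht
  have hround : |((round (t * M) : ℤ) : ℝ)| ≤ M + 1 / 2 :=
    abs_le.2 ⟨by nlinarith, by nlinarith⟩
  have : |round (t * M)| < (M : ℤ) + 1 := by
    rw [← Int.cast_lt (R := ℝ)]
    push_cast
    linarith
  omega

lemma abs_round_mul_div_sub_le {M : ℝ} (hM : 0 < M) (t : ℝ) :
    |(round (t * M) : ℝ) / M - t| ≤ 1 / (2 * M) := by
  have h : (round (t * M) : ℝ) / M - t = -(t * M - round (t * M)) / M := by
    field_simp
    ring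
  rw [h, abs_div, abs_neg, abs_of_pos hM, div_le_iff₀ hM]
  calc |t * M - round (t * M)| ≤ 1 / 2 := abs_sub_round _
    _ = 1 / (2 * M) * M := by field_simp

section Slots

variable {ι : Type*} [DecidableEq ι] {s : ℕ}

/-- `s` slots, each empty or holding an entry `(a, z)`, encode the function `ι → ℤ` that adds up
the entries filed under each `a`. -/
def slotSum (c : Fin s → Option (ι × ℤ)) (a : ι) : ℤ :=
  ∑ k, (c k).elim 0 fun bz => if bz.1 = a then bz.2 else 0

lemma sum_fin_getElem?_eq {α M : Type*} [AddCommMonoid M] (f : Option α → M) (hf : f none = 0) :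
    ∀ (l : List α) {s : ℕ}, l.length ≤ s →
      ∑ k : Fin s, f l[(k : ℕ)]? = (l.map (f ∘ some)).sum
  | [], s, _ => by simp [hf]
  | _ :: _, 0, hl => by simp at hl
  | a :: l, s + 1, hl => by
    rw [Fin.sum_univ_succ, List.map_cons, List.sum_cons,
      ← sum_fin_getElem?_eq f hf l (by simpa using hl)]
    simp

lemma exists_slots (S : Finset ι) (hS : #S ≤ s) (val : ι → ℤ) :
    ∃ c : Fin s → Option (ι × ℤ), (∀ k, ∀ x ∈ c k, x.1 ∈ S ∧ x.2 = val x.1) ∧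
      ∀ a, slotSum c a = if a ∈ S then val a else 0 := by
  set l := S.toList.map fun a => (a, val a)
  refine ⟨fun k => l[(k : ℕ)]?, fun k x hx => ?_, fun a => ?_⟩
  · obtain ⟨b, hb, rfl⟩ := List.mem_map.1 (List.mem_of_getElem? hx)
    exact ⟨Finset.mem_toList.1 hb, rfl⟩
  · have hl : l.length ≤ s := by simpa [l] using hS
    rw [slotSum, sum_fin_getElem?_eq (fun o => o.elim 0 fun bz => if bz.1 = a then bz.2 else 0)
      rfl l hl, List.map_map, Finset.sum_map_toList]
    exact Finset.sum_ite_eq' S a val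

end Slots

section Parameters

/-- Indices of the parameters of a network: `inl (l, i, j)` for the weight `W l i j` and
`inr (l, i)` for the shift `v (l + 1) i` (the input layer carries no shift). -/
abbrev ParamIdx : Type := (ℕ × ℕ × ℕ) ⊕ (ℕ × ℕ)

def weightIdx (L : ℕ) (p : ℕ → ℕ) : Finset (ℕ × ℕ × ℕ) :=
  (range (L + 1)).biUnion fun l => {l} ×ˢ (range (p (l + 1)) ×ˢ range (p l))

def shiftIdx (L : ℕ) (p : ℕ → ℕ) : Finset (ℕ × ℕ) :=
  (range L).biUnion fun l => {l} ×ˢ range (p (l + 1))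

def archIdx (L : ℕ) (p : ℕ → ℕ) : Finset ParamIdx :=
  (weightIdx L p).disjSum (shiftIdx L p)

@[simp]
lemma inl_mem_archIdx {L : ℕ} {p : ℕ → ℕ} {l i j : ℕ} :
    Sum.inl (l, i, j) ∈ archIdx L p ↔ l ≤ L ∧ i < p (l + 1) ∧ j < p l := by
  simp [archIdx, weightIdx]

@[simp]
lemma inr_mem_archIdx {L : ℕ} {p : ℕ → ℕ} {l i : ℕ} :
    Sum.inr (l, i) ∈ archIdx L p ↔ l < L ∧ i < p (l + 1) := by
  simp [archIdx, shiftIdx]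

lemma sum_mul_succ_le_prod_succ (p : ℕ → ℕ) :
    ∀ n, ∑ l ∈ range n, p (l + 1) * (p l + 1) ≤ ∏ l ∈ range (n + 1), (p l + 1)
  | 0 => by simp
  | n + 1 => by
    have ih := sum_mul_succ_le_prod_succ p n
    have hprod : p n + 1 ≤ ∏ l ∈ range (n + 1), (p l + 1) := by
      rw [prod_range_succ]
      exact Nat.le_mul_of_pos_left _ (Finset.one_le_prod' fun _ _ => Nat.le_add_left 1 _)
    rw [sum_range_succ, prod_range_succ _ (n + 1)]
    nlinarith

lemma card_archIdx_le (L : ℕ) (p : ℕ → ℕ) :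
    #(archIdx L p) ≤ ∏ l ∈ range (L + 2), (p l + 1) := by
  have hW : #(weightIdx L p) ≤ ∑ l ∈ range (L + 1), p (l + 1) * p l :=
    card_biUnion_le.trans_eq (sum_congr rfl fun l _ => by simp)
  have hv : #(shiftIdx L p) ≤ ∑ l ∈ range (L + 1), p (l + 1) :=
    card_biUnion_le.trans <| (sum_congr rfl fun l _ => by simp).trans_le <|
      sum_le_sum_of_subset (range_subset_range.2 L.le_succ)
  have hsplit : ∑ l ∈ range (L + 1), p (l + 1) * (p l + 1) =
      ∑ l ∈ range (L + 1), p (l + 1) * p l + ∑ l ∈ range (L + 1), p (l + 1) := by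
    rw [← sum_add_distrib]
    exact sum_congr rfl fun l _ => by ring
  rw [archIdx, card_disjSum]
  have : _ ≤ ∏ l ∈ range (L + 2), (p l + 1) := sum_mul_succ_le_prod_succ p (L + 1)
  omega

variable {p0 : ℕ}

def ReluNet.param (N : ReluNet p0) : ParamIdx → ℝ :=
  Sum.elim (fun q => N.W q.1 q.2.1 q.2.2) fun q => N.v (q.1 + 1) q.2

def ReluNet.ofParam (p0 L : ℕ) (p : ℕ → ℕ) (θ : ParamIdx → ℝ) : ReluNet p0 where
  L := L
  width := p
  W l i j := θ (.inl (l, i, j))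
  v
    | 0, _ => 0
    | l + 1, i => θ (.inr (l, i))

@[simp]
lemma ReluNet.param_ofParam (L : ℕ) (p : ℕ → ℕ) (θ : ParamIdx → ℝ) :
    (ReluNet.ofParam p0 L p θ).param = θ := by
  ext (_ | _) <;> rfl

lemma ReluNet.abs_param_le {N : ReluNet p0} (hN : ParamsBounded N) (a : ParamIdx) :
    |N.param a| ≤ 1 := by
  rcases a with _ | _
  exacts [hN.1 _ _ _, hN.2 _ _]

lemma card_layer_filter {α β : Type*} [DecidableEq α] [DecidableEq β] (l : α) (t : Finset β)
    (P : α × β → Prop) [DecidablePred P] :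
    #(({l} ×ˢ t).filter P) = #(t.filter fun b => P (l, b)) := by
  rw [singleton_product, filter_map, card_map]
  rfl

lemma ReluNet.card_param_ne_zero_le_sparsity {L : ℕ} {p : ℕ → ℕ} {N : ReluNet p0}
    (hL : N.L = L) (hw : N.width = p) :
    #((archIdx L p).filter fun a => N.param a ≠ 0) ≤ sparsity N := by
  have hsplit : (archIdx L p).filter (fun a => N.param a ≠ 0) =
      ((weightIdx L p).filter fun q => N.W q.1 q.2.1 q.2.2 ≠ 0).disjSum
        ((shiftIdx L p).filter fun q => N.v (q.1 + 1) q.2 ≠ 0) := by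
    ext (_ | _) <;> simp only [archIdx, mem_filter, inl_mem_disjSum, inr_mem_disjSum] <;> rfl
  rw [hsplit, card_disjSum, sparsity, hL, hw, weightIdx, shiftIdx, filter_biUnion, filter_biUnion]
  gcongr
  · exact card_biUnion_le.trans_eq (sum_congr rfl fun l _ => card_layer_filter _ _ _)
  · exact card_biUnion_le.trans_eq (sum_congr rfl fun l _ => card_layer_filter _ _ _)

end Parameters

section Perturbation

def widthProd (p : ℕ → ℕ) (l : ℕ) : ℝ := ∏ k ∈ range l, ((p k : ℝ) + 1)

lemma one_le_widthProd (p : ℕ → ℕ) (l : ℕ) : 1 ≤ widthProd p l :=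
  Finset.one_le_prod fun k _ => le_add_of_nonneg_left (p k).cast_nonneg

lemma widthProd_succ (p : ℕ → ℕ) (l : ℕ) :
    widthProd p (l + 1) = (p l + 1) * widthProd p l := by
  rw [widthProd, widthProd, prod_range_succ, mul_comm]

lemma abs_sum_range_le {f : ℕ → ℝ} {n : ℕ} {C : ℝ} (h : ∀ j < n, |f j| ≤ C) :
    |∑ j ∈ range n, f j| ≤ n * C :=
  (abs_sum_le_sum_abs _ _).trans <| (sum_le_sum fun j hj => h j (mem_range.1 hj)).trans_eq
    (by rw [sum_const, card_range, nsmul_eq_mul])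

variable {p0 : ℕ} (N N' : ReluNet p0) {p : ℕ → ℕ} {x : Fin p0 → ℝ}

def preAct (x : Fin p0 → ℝ) (l i : ℕ) : ℝ :=
  ∑ j ∈ range (N.width l), N.W l i j * hiddenOut N x l j

lemma hiddenOut_succ (l i : ℕ) :
    hiddenOut N x (l + 1) i = max (preAct N x l i - N.v (l + 1) i) 0 :=
  rfl

lemma netEval_eq_preAct : netEval N x = preAct N x N.L 0 := rfl

variable {N N'}

lemma abs_hiddenOut_le (hw : N.width = p) (hW : ∀ l i j, |N.W l i j| ≤ 1)
    (hv : ∀ l i, |N.v l i| ≤ 1) (hx : x ∈ cube p0) :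
    ∀ l j, |hiddenOut N x l j| ≤ widthProd p l
  | 0, j => by
    simp only [hiddenOut, widthProd, range_zero, prod_empty]
    split_ifs with hj
    · exact abs_le.2 ⟨by linarith [(hx ⟨j, hj⟩).1], (hx ⟨j, hj⟩).2⟩
    · simp
  | l + 1, i => by
    have hpre : |preAct N x l i| ≤ p l * widthProd p l := by
      rw [preAct, hw]
      refine abs_sum_range_le fun j _ => ?_
      rw [abs_mul]
      exact (mul_le_mul (hW l i j) (abs_hiddenOut_le hw hW hv hx l j) (abs_nonneg _)
        zero_le_one).trans_eq (one_mul _)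
    calc |hiddenOut N x (l + 1) i|
        ≤ |preAct N x l i - N.v (l + 1) i| := by
          simpa [hiddenOut_succ] using abs_max_sub_max_le_abs (preAct N x l i - N.v (l + 1) i) 0 0
      _ ≤ p l * widthProd p l + 1 := (abs_sub _ _).trans (add_le_add hpre (hv _ _))
      _ ≤ widthProd p (l + 1) := by
          rw [widthProd_succ]
          linarith [one_le_widthProd p l]

lemma abs_preAct_sub_le (hw : N.width = p) (hw' : N'.width = p) {l i : ℕ} {ε B η : ℝ}
    (hε : 0 ≤ ε) (hWcl : ∀ j < p l, |N.W l i j - N'.W l i j| ≤ ε)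
    (hW' : ∀ j, |N'.W l i j| ≤ 1) (hB : ∀ j, |hiddenOut N x l j| ≤ B)
    (hη : ∀ j < p l, |hiddenOut N x l j - hiddenOut N' x l j| ≤ η) :
    |preAct N x l i - preAct N' x l i| ≤ p l * (ε * B + η) := by
  rw [preAct, preAct, hw, hw', ← sum_sub_distrib]
  refine abs_sum_range_le fun j hj => ?_
  calc |N.W l i j * hiddenOut N x l j - N'.W l i j * hiddenOut N' x l j|
      = |(N.W l i j - N'.W l i j) * hiddenOut N x l j +
          N'.W l i j * (hiddenOut N x l j - hiddenOut N' x l j)| := by ring_nf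
    _ ≤ ε * B + 1 * η := by
        refine (abs_add_le _ _).trans ?_
        rw [abs_mul, abs_mul]
        gcongr
        exacts [hWcl j hj, hB j, hW' j, hη j hj]
    _ = ε * B + η := by ring

variable {L : ℕ} {ε : ℝ}

/-- Each layer adds the error `ε` of its own parameters to the propagated error of the previous
one. -/
lemma abs_hiddenOut_sub_le (hw : N.width = p) (hw' : N'.width = p)
    (hW : ∀ l i j, |N.W l i j| ≤ 1) (hv : ∀ l i, |N.v l i| ≤ 1)
    (hW' : ∀ l i j, |N'.W l i j| ≤ 1) (hε : 0 ≤ ε)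
    (hcl : ∀ a ∈ archIdx L p, |N.param a - N'.param a| ≤ ε) (hx : x ∈ cube p0) :
    ∀ l ≤ L, ∀ i < p l, |hiddenOut N x l i - hiddenOut N' x l i| ≤ ε * l * widthProd p l
  | 0, _, i, _ => by simp [hiddenOut]
  | l + 1, hl, i, hi => by
    have hpre := abs_preAct_sub_le hw hw' hε
      (fun j hj => hcl (.inl (l, i, j)) (by rw [inl_mem_archIdx]; omega)) (hW' l i)
      (abs_hiddenOut_le hw hW hv hx l)
      (abs_hiddenOut_sub_le hw hw' hW hv hW' hε hcl hx l (by omega))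
    have hshift : |N.v (l + 1) i - N'.v (l + 1) i| ≤ ε :=
      hcl (.inr (l, i)) (by rw [inr_mem_archIdx]; omega)
    have hB := one_le_widthProd p l
    calc |hiddenOut N x (l + 1) i - hiddenOut N' x (l + 1) i|
        ≤ |(preAct N x l i - preAct N' x l i) - (N.v (l + 1) i - N'.v (l + 1) i)| := by
          rw [hiddenOut_succ, hiddenOut_succ, sub_sub_sub_comm]
          exact abs_max_sub_max_le_abs _ _ _
      _ ≤ p l * (ε * widthProd p l + ε * l * widthProd p l) + ε :=
          (abs_sub _ _).trans (add_le_add hpre hshift)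
      _ ≤ ε * ↑(l + 1) * widthProd p (l + 1) := by
          rw [widthProd_succ]
          push_cast
          nlinarith [mul_nonneg hε (p l).cast_nonneg, mul_nonneg hε l.cast_nonneg]

lemma abs_netEval_sub_le (hL : N.L = L) (hL' : N'.L = L) (hw : N.width = p)
    (hw' : N'.width = p) (hout : 0 < p (L + 1))
    (hW : ∀ l i j, |N.W l i j| ≤ 1) (hv : ∀ l i, |N.v l i| ≤ 1)
    (hW' : ∀ l i j, |N'.W l i j| ≤ 1) (hε : 0 ≤ ε)
    (hcl : ∀ a ∈ archIdx L p, |N.param a - N'.param a| ≤ ε) (hx : x ∈ cube p0) :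
    |netEval N x - netEval N' x| ≤ ε * (L + 1) * widthProd p (L + 1) := by
  rw [netEval_eq_preAct, netEval_eq_preAct, hL, hL']
  have hpre := abs_preAct_sub_le hw hw' hε
    (fun j hj => hcl (.inl (L, 0, j)) (by rw [inl_mem_archIdx]; omega)) (hW' L 0)
    (abs_hiddenOut_le hw hW hv hx L) (abs_hiddenOut_sub_le hw hw' hW hv hW' hε hcl hx L le_rfl)
  have hB := one_le_widthProd p L
  refine hpre.trans ?_
  rw [widthProd_succ]
  nlinarith [mul_nonneg hε (p L).cast_nonneg, mul_nonneg hε L.cast_nonneg]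

end Perturbation

section GridNet

variable {p0 : ℕ}

def centered (N : ReluNet p0) (x : Fin p0 → ℝ) : ℝ := netEval N x - netEval N 0

lemma abs_centered_sub_le {N N' : ReluNet p0} {L : ℕ} {p : ℕ → ℕ} {ε : ℝ} (hL : N.L = L)
    (hL' : N'.L = L) (hw : N.width = p) (hw' : N'.width = p) (hout : 0 < p (L + 1))
    (hN : ParamsBounded N) (hW' : ∀ l i j, |N'.W l i j| ≤ 1) (hε : 0 ≤ ε)
    (hcl : ∀ a ∈ archIdx L p, |N.param a - N'.param a| ≤ ε) {x : Fin p0 → ℝ}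
    (hx : x ∈ cube p0) :
    |centered N x - centered N' x| ≤ 2 * ε * (L + 1) * widthProd p (L + 1) := by
  have hnet {y : Fin p0 → ℝ} (hy : y ∈ cube p0) :=
    abs_netEval_sub_le hL hL' hw hw' hout hN.1 hN.2 hW' hε hcl hy
  have h0 : |netEval N 0 - netEval N' 0| ≤ ε * (L + 1) * widthProd p (L + 1) :=
    hnet fun _ => ⟨le_rfl, zero_le_one⟩
  calc |centered N x - centered N' x|
      = |(netEval N x - netEval N' x) - (netEval N 0 - netEval N' 0)| := by
        rw [centered, centered]
        ring_nf
    _ ≤ 2 * ε * (L + 1) * widthProd p (L + 1) := by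
        linarith [abs_sub (netEval N x - netEval N' x) (netEval N 0 - netEval N' 0), hnet hx]

def decode (p0 L : ℕ) (p : ℕ → ℕ) (M : ℕ) {s : ℕ}
    (c : Fin s → Option (ParamIdx × ℤ)) : ReluNet p0 :=
  ReluNet.ofParam p0 L p fun a => (slotSum c a : ℝ) / M

open Classical in
/-- Centered networks with at most `s` nonzero parameters, all on the grid `ℤ / M ∩ [-1, 1]`. -/
def gridNet (p0 L : ℕ) (p : ℕ → ℕ) (s M : ℕ) : Finset ((Fin p0 → ℝ) → ℝ) :=
  (Fintype.piFinset fun _ : Fin s => (archIdx L p ×ˢ Icc (-(M : ℤ)) M).insertNone).image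
    fun c => centered (decode p0 L p M c)

lemma card_gridNet_le (p0 L : ℕ) (p : ℕ → ℕ) (s M : ℕ) :
    #(gridNet p0 L p s M) ≤ (#(archIdx L p) * (2 * M + 1) + 1) ^ s := by
  classical
  refine card_image_le.trans_eq ?_
  rw [Fintype.card_piFinset_const, card_insertNone, card_product, Int.card_Icc]
  congr 3
  omega

/-- Round every parameter of `N` to the grid `ℤ / M`: zero parameters stay zero, so the rounded
network is still `s`-sparse. -/
lemma exists_mem_gridNet_near {L s M : ℕ} {p : ℕ → ℕ} {F : ℝ} (hM : 0 < M)
    (hout : 0 < p (L + 1)) {g : (Fin p0 → ℝ) → ℝ} (hg : g ∈ sparseReluClass p0 L p s F) :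
    ∃ h ∈ gridNet p0 L p s M,
      ∀ x ∈ cube p0, |g x - h x| ≤ (L + 1) * widthProd p (L + 1) / M := by
  obtain ⟨N, hL, hw, -, -, hN, hsp, hgN, -⟩ := hg
  have hM' : (0 : ℝ) < M := Nat.cast_pos.2 hM
  set val : ParamIdx → ℤ := fun a => round (N.param a * M)
  have hval (a : ParamIdx) : |val a| ≤ M := abs_round_mul_le M (N.abs_param_le hN a)
  set S := (archIdx L p).filter fun a => val a ≠ 0
  have hS : #S ≤ s := by
    refine (card_le_card (monotone_filter_right _ fun a _ hva hpa => hva ?_)).trans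
      ((N.card_param_ne_zero_le_sparsity hL hw).trans hsp)
    simp [val, hpa]
  obtain ⟨c, hc, hcS⟩ := exists_slots S hS val
  set N' := decode p0 L p M c
  have hparam (a : ParamIdx) : N'.param a = (if a ∈ S then val a else 0 : ℤ) / M := by
    rw [← hcS]
    exact congrFun (ReluNet.param_ofParam L p _) a
  have hW' (l i j : ℕ) : |N'.W l i j| ≤ 1 := by
    change |N'.param (.inl (l, i, j))| ≤ 1
    rw [hparam, abs_div, abs_of_pos hM', div_le_one hM']
    split_ifs
    · exact_mod_cast hval _
    · simp
  have hcl (a : ParamIdx) (ha : a ∈ archIdx L p) : |N.param a - N'.param a| ≤ 1 / (2 * M) := by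
    have hN'a : N'.param a = (val a : ℝ) / M := by
      rw [hparam]
      split_ifs with haS
      · rfl
      · simp_all [S]
    rw [hN'a, abs_sub_comm]
    exact abs_round_mul_div_sub_le hM' _
  classical
  refine ⟨centered N', mem_image_of_mem _ (Fintype.mem_piFinset.2 fun k => ?_), fun x hx => ?_⟩
  · refine mem_insertNone.2 fun x hx => ?_
    obtain ⟨hxS, hxval⟩ := hc k x hx
    rw [mem_product, mem_Icc, ← abs_le, hxval]
    exact ⟨(mem_filter.1 hxS).1, hval _⟩
  · have hgx : g x = centered N x := hgN x
    rw [hgx]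
    refine (abs_centered_sub_le hL rfl hw rfl hout hN hW' (by positivity) hcl hx).trans_eq ?_
    field_simp

end GridNet

lemma card_codes_le {I V M q : ℝ} (hV : 1 ≤ V) (hq : 1 ≤ q) (hI : I ≤ V)
    (hM₀ : 0 ≤ M) (hM : M ≤ q + 1) : I * (2 * M + 1) + 1 ≤ 6 * (V * q) := by
  nlinarith [mul_le_mul hI (show 2 * M + 1 ≤ 2 * q + 3 by linarith) (by nlinarith) (by linarith)]

/-- The grid spacing `1 / M` with `M = ⌈(L+1) V / δ⌉` makes `gridNet` a `δ`-net. -/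
lemma exists_finset_cover_sparseReluClass {p0 L s : ℕ} {p : ℕ → ℕ} {F δ : ℝ}
    (hout : 0 < p (L + 1)) (hδ : 0 < δ) (hδ1 : δ ≤ 1) :
    ∃ 𝒩 : Finset ((Fin p0 → ℝ) → ℝ),
      (∀ g ∈ sparseReluClass p0 L p s F, ∃ h ∈ 𝒩, ∀ x ∈ cube p0, |g x - h x| ≤ δ) ∧
      (#𝒩 : ℝ) ≤ (6 * δ⁻¹ * (L + 1) * widthProd p (L + 2) ^ 2) ^ s := by
  set V := widthProd p (L + 2)
  set q := (L + 1) * V / δ with hq_def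
  have hV : 1 ≤ V := one_le_widthProd p (L + 2)
  have hq : 1 ≤ q := by
    rw [le_div_iff₀ hδ, one_mul]
    nlinarith [L.cast_nonneg (α := ℝ)]
  set M := ⌈q⌉₊
  have hM : (0 : ℝ) < M := lt_of_lt_of_le (by linarith) (Nat.le_ceil q)
  refine ⟨gridNet p0 L p s M, fun g hg => ?_, ?_⟩
  · obtain ⟨h, hh, hgh⟩ := exists_mem_gridNet_near (Nat.cast_pos.1 hM) hout hg
    refine ⟨h, hh, fun x hx => (hgh x hx).trans ?_⟩
    have hVL : widthProd p (L + 1) ≤ V := by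
      rw [show V = widthProd p (L + 1 + 1) from rfl, widthProd_succ p (L + 1)]
      nlinarith [one_le_widthProd p (L + 1), (p (L + 1)).cast_nonneg (α := ℝ)]
    rw [div_le_iff₀ hM]
    calc (L + 1) * widthProd p (L + 1) ≤ (L + 1) * V := by gcongr
      _ = δ * q := by rw [hq_def]; field_simp
      _ ≤ δ * M := by gcongr; exact Nat.le_ceil q
  · have hI : (#(archIdx L p) : ℝ) ≤ V := by
      simpa [V, widthProd] using (Nat.cast_le (α := ℝ)).2 (card_archIdx_le L p)
    have hO := card_codes_le hV hq hI (Nat.cast_nonneg _) (Nat.ceil_lt_add_one (by linarith)).le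
    calc (#(gridNet p0 L p s M) : ℝ)
        ≤ ((#(archIdx L p) * (2 * M + 1) + 1 : ℕ) : ℝ) ^ s := by
          exact_mod_cast card_gridNet_le p0 L p s M
      _ ≤ (6 * (V * q)) ^ s := by
          gcongr
          push_cast
          exact hO
      _ = (6 * δ⁻¹ * (L + 1) * V ^ 2) ^ s := by
          rw [hq_def]
          field_simp

lemma log_natCast_le_succ_mul_log {n s : ℕ} {K : ℝ} (hK : 1 ≤ K) (hn : (n : ℝ) ≤ K ^ s) :
    Real.log n ≤ (s + 1) * Real.log K := by
  have hlogK : 0 ≤ Real.log K := Real.log_nonneg hK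
  rcases n.eq_zero_or_pos with rfl | hn0
  · simp only [Nat.cast_zero, Real.log_zero]
    positivity
  calc Real.log n ≤ Real.log (K ^ s) := Real.log_le_log (by exact_mod_cast hn0) hn
    _ = s * Real.log K := Real.log_pow K s
    _ ≤ (s + 1) * Real.log K := by nlinarith

end CoxDNN

open CoxDNN

/-- There exists an absolute constant `C > 0` such that for every
depth `L ≥ 1`, width vector `p` with `p (L+1) = 1`, sparsity `s ≥ 1`, envelope `F > 0`
and every `δ ∈ (0,1]`, the class `F(L,p,s,F)` of centered `s`-sparse ReLU networks on
`[0,1]^{p0}` admits a `δ`-net `𝒩` in the sup norm with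
`log #𝒩 ≤ (s+1) · log (C δ⁻¹ (L+1) V²)` where `V = Π_{l=0}^{L+1} (p_l + 1)`. -/
theorem stmt13 :
    ∃ C : ℝ, 0 < C ∧
      ∀ (p0 L : ℕ) (p : ℕ → ℕ) (s : ℕ) (F δ : ℝ),
        1 ≤ L → p 0 = p0 → p (L + 1) = 1 → 1 ≤ s → 0 < F → 0 < δ → δ ≤ 1 →
          ∃ 𝒩 : Finset ((Fin p0 → ℝ) → ℝ),
            (∀ g ∈ sparseReluClass p0 L p s F, ∃ h ∈ 𝒩,
              ∀ x ∈ cube p0, |g x - h x| ≤ δ) ∧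
            Real.log (𝒩.card) ≤
              (s + 1 : ℝ) *
                Real.log (C * δ⁻¹ * (L + 1) *
                  (∏ l ∈ Finset.range (L + 2), ((p l : ℝ) + 1)) ^ 2) := by
  refine ⟨6, by norm_num, fun p0 L p s F δ _ _ hout _ _ hδ hδ1 => ?_⟩
  obtain ⟨𝒩, hcover, hcard⟩ :=
    exists_finset_cover_sparseReluClass (p0 := p0) (s := s) (F := F) (hout ▸ one_pos) hδ hδ1
  have hK : 1 ≤ 6 * δ⁻¹ * (L + 1) * widthProd p (L + 2) ^ 2 := by
    have hδ' : 1 ≤ δ⁻¹ := one_le_inv₀ hδ |>.2 hδ1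
    have hV := one_le_widthProd p (L + 2)
    have hL : (1 : ℝ) ≤ L + 1 := by linarith [L.cast_nonneg (α := ℝ)]
    have : 1 ≤ δ⁻¹ * (L + 1) * widthProd p (L + 2) ^ 2 :=
      one_le_mul_of_one_le_of_one_le (one_le_mul_of_one_le_of_one_le hδ' hL) (one_le_pow₀ hV)
    linarith
  exact ⟨𝒩, hcover, log_natCast_le_succ_mul_log hK hcard⟩
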